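/- arXiv:1902.06227 — 2 statements merged into one kernel-verified Lean document; each statement's English description precedes it below -/
import Mathlib

section
/- (Lemma 3, second equation) Let ν ∈ ℝ and let ω⁻_ν(x) = e^(−1/x) x^(−1) ρ_ν(x). Then ω⁻_ν is twice differentiable on (0,∞) and satisfies the second-order differential equation x⁴·(ω⁻_ν)''(x) + x²·((3 − ν)x − 2)·(ω⁻_ν)'(x) − (x − 1)·(x² + νx + 1)·ω⁻_ν(x) = 0 for all x > 0. -/
open Real MeasureTheory

/-- The scaled Macdonald function `ρ_ν(x) = ∫₀^∞ t^(ν−1) e^(−t − x/t) dt`. -/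
noncomputable def rho (ν x : ℝ) : ℝ :=
  ∫ t in Set.Ioi (0 : ℝ), t ^ (ν - 1) * Real.exp (-t - x / t)

open Set Filter Topology

lemma ker_contOn (μ c : ℝ) :
    ContinuousOn (fun t : ℝ => t ^ μ * Real.exp (-t - c / t)) (Set.Ioi 0) := by
  intro t ht
  have ht0 : t ≠ 0 := ne_of_gt ht
  apply ContinuousAt.continuousWithinAt
  exact (Real.continuousAt_rpow_const t μ (Or.inl ht0)).mul
    (Real.continuous_exp.continuousAt.comp
      ((continuousAt_id.neg).sub (continuousAt_const.div continuousAt_id ht0)))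

lemma ker_aesm (μ c : ℝ) :
    AEStronglyMeasurable (fun t : ℝ => t ^ μ * Real.exp (-t - c / t))
      (volume.restrict (Set.Ioi 0)) :=
  (ker_contOn μ c).aestronglyMeasurable measurableSet_Ioi

lemma ker_small_bound (μ : ℝ) {c : ℝ} (hc : 0 < c) :
    ∃ C : ℝ, ∀ t : ℝ, 0 < t → t ≤ 1 → t ^ μ * Real.exp (-t - c / t) ≤ C := by
  set n : ℕ := ⌈|μ|⌉₊
  refine ⟨(Nat.factorial n : ℝ) / c ^ n, fun t ht ht1 => ?_⟩
  have hμn : 0 ≤ μ + n := by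
    have : |μ| ≤ n := Nat.le_ceil _
    have := neg_abs_le μ
    linarith
  have h1 : Real.exp (-t - c / t) ≤ Real.exp (- (c / t)) := by
    apply Real.exp_le_exp.2; have : 0 < c / t := div_pos hc ht; linarith
  have h2 : Real.exp (-(c / t)) ≤ (n.factorial : ℝ) * (t / c) ^ n := by
    rw [Real.exp_neg]
    have hpos : (0:ℝ) < (c/t) ^ n / n.factorial := by positivity
    have hle : (c/t) ^ n / n.factorial ≤ Real.exp (c / t) :=
      Real.pow_div_factorial_le_exp _ (le_of_lt (div_pos hc ht)) n
    calc (Real.exp (c/t))⁻¹ ≤ ((c/t)^n / n.factorial)⁻¹ := by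
          exact inv_anti₀ hpos hle
      _ = (n.factorial : ℝ) * (t / c) ^ n := by
          rw [div_pow, div_pow]
          field_simp
  calc t ^ μ * Real.exp (-t - c / t) ≤ t ^ μ * ((n.factorial : ℝ) * (t / c) ^ n) := by
        apply mul_le_mul_of_nonneg_left (h1.trans h2) (Real.rpow_nonneg ht.le μ)
    _ = (n.factorial : ℝ) / c ^ n * (t ^ μ * t ^ (n:ℝ)) := by
        rw [div_pow, Real.rpow_natCast]
        field_simp
    _ = (n.factorial : ℝ) / c ^ n * t ^ (μ + n) := by rw [← Real.rpow_add ht]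
    _ ≤ (n.factorial : ℝ) / c ^ n * 1 := by
        apply mul_le_mul_of_nonneg_left _ (by positivity)
        exact Real.rpow_le_one ht.le ht1 hμn
    _ = (n.factorial : ℝ) / c ^ n := mul_one _

lemma ker_integrable (μ : ℝ) {c : ℝ} (hc : 0 < c) :
    IntegrableOn (fun t : ℝ => t ^ μ * Real.exp (-t - c / t)) (Set.Ioi 0) := by
  have hIoi : Set.Ioc (0:ℝ) 1 ∪ Set.Ioi 1 = Set.Ioi 0 := Set.Ioc_union_Ioi_eq_Ioi zero_le_one
  rw [← hIoi]
  apply IntegrableOn.union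
  · -- on (0,1]
    obtain ⟨C, hC⟩ := ker_small_bound μ hc
    have hconst : IntegrableOn (fun _ : ℝ => C) (Set.Ioc (0:ℝ) 1) :=
      integrableOn_const measure_Ioc_lt_top.ne
    apply hconst.mono' (((ker_contOn μ c).mono (fun t ht => ht.1)).aestronglyMeasurable measurableSet_Ioc)
    filter_upwards [ae_restrict_mem measurableSet_Ioc] with t ht
    have ht0 : (0:ℝ) < t := ht.1
    have hpos : (0:ℝ) ≤ t ^ μ * Real.exp (-t - c / t) := by positivity
    rw [Real.norm_eq_abs, abs_of_nonneg hpos]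
    exact hC t ht.1 ht.2
  · -- on (1,∞)
    set s : ℝ := max (μ + 1) 1 with hs
    have hs0 : 0 < s := lt_of_lt_of_le one_pos (le_max_right _ _)
    have hG : IntegrableOn (fun t : ℝ => Real.exp (-t) * t ^ (s - 1)) (Set.Ioi 1) :=
      (Real.GammaIntegral_convergent hs0).mono_set (Set.Ioi_subset_Ioi zero_le_one)
    apply hG.mono' (((ker_contOn μ c).mono (fun t ht => lt_trans one_pos ht.out)).aestronglyMeasurable measurableSet_Ioi)
    filter_upwards [ae_restrict_mem measurableSet_Ioi] with t ht
    have ht1 : (1:ℝ) ≤ t := le_of_lt ht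
    have ht0 : (0:ℝ) < t := lt_of_lt_of_le one_pos ht1
    have hpos : (0:ℝ) ≤ t ^ μ * Real.exp (-t - c / t) := by positivity
    rw [Real.norm_eq_abs, abs_of_nonneg hpos]
    have h1 : t ^ μ ≤ t ^ (s - 1) :=
      Real.rpow_le_rpow_of_exponent_le ht1 (by linarith [le_max_left (μ+1) (1:ℝ)])
    have h2 : Real.exp (-t - c / t) ≤ Real.exp (-t) := by
      apply Real.exp_le_exp.2
      have : 0 < c / t := div_pos hc ht0
      linarith
    calc t ^ μ * Real.exp (-t - c / t) ≤ t ^ (s-1) * Real.exp (-t) :=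
          mul_le_mul h1 h2 (Real.exp_pos _).le (Real.rpow_nonneg ht0.le _)
      _ = Real.exp (-t) * t ^ (s-1) := mul_comm _ _

lemma ker_tendsto_zero (μ : ℝ) {c : ℝ} (hc : 0 < c) :
    Tendsto (fun t : ℝ => t ^ μ * Real.exp (-t - c / t)) (𝓝[>] (0:ℝ)) (𝓝 0) := by
  have h1 : Tendsto (fun u : ℝ => u ^ (-μ) * Real.exp (-c * u)) atTop (𝓝 0) :=
    tendsto_rpow_mul_exp_neg_mul_atTop_nhds_zero (-μ) c hc
  have h2 : Tendsto (fun t : ℝ => (t⁻¹) ^ (-μ) * Real.exp (-c * t⁻¹)) (𝓝[>] (0:ℝ)) (𝓝 0) :=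
    h1.comp tendsto_inv_nhdsGT_zero
  have h3 : Tendsto (fun t : ℝ => Real.exp (-t)) (𝓝[>] (0:ℝ)) (𝓝 1) := by
    have : Tendsto (fun t : ℝ => Real.exp (-t)) (𝓝 (0:ℝ)) (𝓝 1) := by
      have := (Real.continuous_exp.comp continuous_neg).tendsto (0:ℝ)
      simpa [Function.comp_def] using this
    exact this.mono_left nhdsWithin_le_nhds
  have key : Tendsto (fun t : ℝ => (t⁻¹) ^ (-μ) * Real.exp (-c * t⁻¹) * Real.exp (-t))
      (𝓝[>] (0:ℝ)) (𝓝 0) := by simpa using h2.mul h3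
  apply key.congr'
  filter_upwards [self_mem_nhdsWithin] with t ht
  have ht0 : (0:ℝ) < t := ht
  rw [Real.inv_rpow ht0.le, Real.rpow_neg ht0.le, inv_inv, mul_assoc, ← Real.exp_add]
  congr 2
  field_simp
  ring

lemma ker_tendsto_atTop (μ : ℝ) {c : ℝ} (hc : 0 < c) :
    Tendsto (fun t : ℝ => t ^ μ * Real.exp (-t - c / t)) atTop (𝓝 0) := by
  have h1 : Tendsto (fun t : ℝ => t ^ μ * Real.exp (-1 * t)) atTop (𝓝 0) :=
    tendsto_rpow_mul_exp_neg_mul_atTop_nhds_zero μ 1 one_pos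
  have h2 : Tendsto (fun t : ℝ => Real.exp (-(c / t))) atTop (𝓝 1) := by
    have hct : Tendsto (fun t : ℝ => -(c / t)) atTop (𝓝 0) := by
      have h0 : Tendsto (fun t : ℝ => c / t) atTop (𝓝 0) :=
        tendsto_const_nhds.div_atTop tendsto_id
      simpa using h0.neg
    simpa [Function.comp_def] using (Real.continuous_exp.tendsto 0).comp hct
  have key := h1.mul h2
  rw [zero_mul] at key
  apply key.congr
  intro t
  rw [mul_assoc, ← Real.exp_add]
  ring_nf

lemma rho_hasDerivAt (ν : ℝ) {x : ℝ} (hx : 0 < x) :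
    HasDerivAt (rho ν) (-(rho (ν - 1) x)) x := by
  have hmem : ∀ᵐ t ∂(volume.restrict (Set.Ioi (0:ℝ))), t ∈ Set.Ioi (0:ℝ) :=
    ae_restrict_mem measurableSet_Ioi
  have key := hasDerivAt_integral_of_dominated_loc_of_deriv_le (μ := volume.restrict (Set.Ioi (0:ℝ)))
    (F := fun y t => t ^ (ν - 1) * Real.exp (-t - y / t))
    (F' := fun y t => -(t ^ (ν - 2) * Real.exp (-t - y / t)))
    (x₀ := x) (bound := fun t => t ^ (ν - 2) * Real.exp (-t - (x/2) / t))
    (Metric.ball_mem_nhds x (half_pos hx))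
    (Filter.Eventually.of_forall fun y => ker_aesm (ν - 1) y)
    (ker_integrable (ν - 1) hx)
    ((ker_aesm (ν - 2) x).neg)
    ?_ (ker_integrable (ν - 2) (half_pos hx)) ?_
  · have h2 : -(rho (ν - 1) x) = ∫ t in Set.Ioi (0:ℝ), -(t ^ (ν - 2) * Real.exp (-t - x / t)) := by
      rw [integral_neg, rho]
      congr 1
      apply setIntegral_congr_fun measurableSet_Ioi
      intro t _
      congr 2
      ring
    rw [h2]
    exact key.2
  · filter_upwards [hmem] with t ht
    intro y hy
    have ht0 : (0:ℝ) < t := ht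
    have hy2 : x / 2 ≤ y := by
      have := abs_lt.1 (mem_ball_iff_norm.1 hy)
      linarith [this.1]
    have hpos : (0:ℝ) ≤ t ^ (ν-2) * Real.exp (-t - y / t) := by positivity
    rw [norm_neg, Real.norm_eq_abs, abs_of_nonneg hpos]
    apply mul_le_mul_of_nonneg_left _ (Real.rpow_nonneg ht0.le _)
    apply Real.exp_le_exp.2
    have hdiv : x / 2 / t ≤ y / t := by gcongr
    linarith
  · filter_upwards [hmem] with t ht
    intro y _
    have ht0 : (0:ℝ) < t := ht
    have hinner : HasDerivAt (fun y : ℝ => -t - y / t) (-(1/t)) y := by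
      simpa [sub_eq_add_neg] using ((hasDerivAt_id y).div_const t).neg.const_add (-t)
    have := (hinner.exp).const_mul (t ^ (ν - 1))
    refine this.congr_deriv ?_
    have ht' : t ^ (ν - 2) = t ^ (ν - 1) * t⁻¹ := by
      rw [← Real.rpow_neg_one t, ← Real.rpow_add ht0]; congr 1; ring
    rw [ht']
    field_simp

lemma rho_rec (ν : ℝ) {x : ℝ} (hx : 0 < x) :
    x * rho (ν - 2) x + (ν - 1) * rho (ν - 1) x - rho ν x = 0 := by
  set g : ℝ → ℝ := fun t => t ^ (ν - 1) * Real.exp (-t - x / t) with hg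
  set g' : ℝ → ℝ := fun t =>
    ((ν - 1) * t ^ (ν - 2) - t ^ (ν - 1) + x * t ^ (ν - 3)) * Real.exp (-t - x / t) with hg'
  have hderiv : ∀ t ∈ Set.Ioi (0:ℝ), HasDerivAt g (g' t) t := by
    intro t ht
    have ht0 : (0:ℝ) < t := ht
    have h1 : HasDerivAt (fun t : ℝ => t ^ (ν - 1)) ((ν - 1) * t ^ (ν - 2)) t := by
      have := Real.hasDerivAt_rpow_const (x := t) (p := ν - 1) (Or.inl ht0.ne')
      convert this using 2
      congr 1
      ring
    have h2 : HasDerivAt (fun t : ℝ => -t - x / t) (-1 + x * (t ^ 2)⁻¹) t := by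
      have ha : HasDerivAt (fun t : ℝ => -t) (-1) t := (hasDerivAt_id t).neg
      have hb : HasDerivAt (fun t : ℝ => x / t) (-(x / t ^ 2)) t := by
        simpa [div_eq_mul_inv] using ((hasDerivAt_inv ht0.ne').const_mul x)
      have := ha.sub hb
      refine this.congr_deriv ?_
      rw [sub_neg_eq_add, div_eq_mul_inv]
    have := h1.mul (h2.exp)
    refine this.congr_deriv ?_
    have e3 : t ^ (ν - 3) = t ^ (ν - 1) * (t^2)⁻¹ := by
      have h2 : ((t:ℝ)^2)⁻¹ = t ^ (-2:ℝ) := by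
        rw [← Real.rpow_natCast t 2, ← Real.rpow_neg ht0.le]
        norm_num
      rw [h2, ← Real.rpow_add ht0]
      congr 1
      ring
    simp only [hg']
    rw [e3]
    ring
  have hint : IntegrableOn g' (Set.Ioi 0) := by
    have h1 := (ker_integrable (ν - 2) hx).const_mul (ν - 1)
    have h2 := ker_integrable (ν - 1) hx
    have h3 := (ker_integrable (ν - 3) hx).const_mul x
    have := (h1.sub h2).add h3
    apply this.congr (Filter.Eventually.of_forall fun t => ?_)
    simp only [hg', Pi.add_apply, Pi.sub_apply]
    ring
  have hlim : Tendsto g atTop (𝓝 0) := ker_tendsto_atTop (ν - 1) hx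
  have hIoiε : ∀ ε : ℝ, 0 < ε → ∫ t in Set.Ioi ε, g' t = -(g ε) := by
    intro ε hε
    have : ∫ t in Set.Ioi ε, g' t = 0 - g ε := by
      apply integral_Ioi_of_hasDerivAt_of_tendsto
      · exact ((hderiv ε hε).continuousAt).continuousWithinAt
      · intro t ht; exact hderiv t (lt_trans hε ht)
      · exact hint.mono_set (Set.Ioi_subset_Ioi hε.le)
      · exact hlim
    rw [this]; ring
  -- now take ε = 1/(n+1) → 0
  have hmono : Monotone (fun n : ℕ => Set.Ioi ((1:ℝ)/(n+1))) := by
    intro m n hmn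
    apply Set.Ioi_subset_Ioi
    apply div_le_div_of_nonneg_left one_pos.le (by positivity)
    exact_mod_cast by exact_mod_cast add_le_add_left (Nat.cast_le.2 hmn) 1
  have hunion : (⋃ n : ℕ, Set.Ioi ((1:ℝ)/(n+1))) = Set.Ioi (0:ℝ) := by
    ext t
    simp only [Set.mem_iUnion, Set.mem_Ioi]
    constructor
    · rintro ⟨n, hn⟩; exact lt_trans (by positivity) hn
    · intro ht
      obtain ⟨n, hn⟩ := exists_nat_one_div_lt ht
      exact ⟨n, hn⟩
  have htendsto : Tendsto (fun n : ℕ => ∫ t in Set.Ioi ((1:ℝ)/(n+1)), g' t) atTop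
      (𝓝 (∫ t in Set.Ioi (0:ℝ), g' t)) := by
    have := tendsto_setIntegral_of_monotone (fun n : ℕ => measurableSet_Ioi) hmono
      (by rw [hunion]; exact hint)
    rwa [hunion] at this
  have htendsto2 : Tendsto (fun n : ℕ => ∫ t in Set.Ioi ((1:ℝ)/(n+1)), g' t) atTop (𝓝 0) := by
    have hseq : Tendsto (fun n : ℕ => (1:ℝ)/(n+1)) atTop (𝓝[>] (0:ℝ)) := by
      apply tendsto_nhdsWithin_of_tendsto_nhds_of_eventually_within
      · exact tendsto_one_div_add_atTop_nhds_zero_nat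
      · exact Filter.Eventually.of_forall fun n => Set.mem_Ioi.2 (by positivity)
    have hcomp := (ker_tendsto_zero (ν - 1) hx).comp hseq
    have h2 : Tendsto (fun n : ℕ => -(g ((1:ℝ)/(n+1)))) atTop (𝓝 0) := by
      have := hcomp.neg
      rw [neg_zero] at this
      exact this
    apply h2.congr
    intro n
    rw [hIoiε _ (by positivity)]
  have hzero : ∫ t in Set.Ioi (0:ℝ), g' t = 0 := tendsto_nhds_unique htendsto htendsto2
  -- expand the integral
  have hsplit : ∫ t in Set.Ioi (0:ℝ), g' t
      = (ν - 1) * rho (ν - 1) x - rho ν x + x * rho (ν - 2) x := by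
    have i2 := ker_integrable (ν - 2) hx
    have i1 := ker_integrable (ν - 1) hx
    have i3 := ker_integrable (ν - 3) hx
    have step1 : ∫ t in Set.Ioi (0:ℝ), g' t
        = ∫ t in Set.Ioi (0:ℝ), ((ν - 1) * (t ^ (ν-2) * Real.exp (-t - x/t))
            - t ^ (ν-1) * Real.exp (-t - x/t)) + x * (t ^ (ν-3) * Real.exp (-t - x/t)) := by
      apply setIntegral_congr_fun measurableSet_Ioi
      intro t _
      simp only [hg']
      ring
    have iA : Integrable (fun t : ℝ => (ν - 1) * (t ^ (ν-2) * Real.exp (-t - x/t)))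
        (volume.restrict (Set.Ioi 0)) := i2.const_mul (ν-1)
    have iB : Integrable (fun t : ℝ => x * (t ^ (ν-3) * Real.exp (-t - x/t)))
        (volume.restrict (Set.Ioi 0)) := i3.const_mul x
    have iAB : Integrable (fun t : ℝ => (ν - 1) * (t ^ (ν-2) * Real.exp (-t - x/t))
        - t ^ (ν-1) * Real.exp (-t - x/t)) (volume.restrict (Set.Ioi 0)) := iA.sub i1
    rw [step1, integral_add iAB iB, integral_sub iA i1, integral_const_mul, integral_const_mul]
    have r1 : rho (ν - 1) x = ∫ t in Set.Ioi (0:ℝ), t ^ (ν-2) * Real.exp (-t - x/t) := by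
      rw [rho]
      apply setIntegral_congr_fun measurableSet_Ioi
      intro t _
      ring
    have r2 : rho (ν - 2) x = ∫ t in Set.Ioi (0:ℝ), t ^ (ν-3) * Real.exp (-t - x/t) := by
      rw [rho]
      apply setIntegral_congr_fun measurableSet_Ioi
      intro t _
      ring
    have r0 : rho ν x = ∫ t in Set.Ioi (0:ℝ), t ^ (ν-1) * Real.exp (-t - x/t) := rfl
    rw [← r1, ← r2, ← r0]
  rw [hsplit] at hzero
  linarith

lemma neg_one_div_hasDerivAt {x : ℝ} (hx : 0 < x) :
    HasDerivAt (fun y : ℝ => -1 / y) (x⁻¹ * x⁻¹) x := by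
  have heq : (fun y : ℝ => -1 / y) = fun y : ℝ => -1 * y⁻¹ := by
    funext y; rw [div_eq_mul_inv]
  rw [heq]
  have := (hasDerivAt_inv hx.ne').const_mul (-1 : ℝ)
  refine this.congr_deriv ?_
  rw [pow_two, mul_inv]
  field_simp

lemma omega_deriv (ν : ℝ) {x : ℝ} (hx : 0 < x) :
    HasDerivAt (fun y => Real.exp (-1 / y) * y⁻¹ * rho ν y)
      (Real.exp (-1 / x) * ((x⁻¹ * x⁻¹ * x⁻¹ - x⁻¹ * x⁻¹) * rho ν x - x⁻¹ * rho (ν - 1) x)) x := by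
  have hinv : HasDerivAt (fun y : ℝ => y⁻¹) (-(x ^ 2)⁻¹) x := hasDerivAt_inv hx.ne'
  have hE := (neg_one_div_hasDerivAt hx).exp.mul hinv
  have h := hE.mul (rho_hasDerivAt ν hx)
  refine h.congr_deriv ?_
  simp only [Pi.mul_apply, Pi.sub_apply]
  have h2 : ((x:ℝ) ^ 2)⁻¹ = x⁻¹ * x⁻¹ := by rw [pow_two, mul_inv]
  rw [h2]
  ring

lemma omega_deriv2 (ν : ℝ) {x : ℝ} (hx : 0 < x) :
    HasDerivAt (fun y => Real.exp (-1 / y) *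
        ((y⁻¹ * y⁻¹ * y⁻¹ - y⁻¹ * y⁻¹) * rho ν y - y⁻¹ * rho (ν - 1) y))
      (Real.exp (-1 / x) * ((x⁻¹^5 - 4*x⁻¹^4 + 2*x⁻¹^3) * rho ν x
        - (2*x⁻¹^3 - 2*x⁻¹^2) * rho (ν - 1) x + x⁻¹ * rho (ν - 2) x)) x := by
  have hinv : HasDerivAt (fun y : ℝ => y⁻¹) (-(x ^ 2)⁻¹) x := hasDerivAt_inv hx.ne'
  have hρ0 := rho_hasDerivAt ν hx
  have hρ1 := rho_hasDerivAt (ν - 1) hx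
  rw [show ν - 1 - 1 = ν - 2 by ring] at hρ1
  have hcube := ((hinv.mul hinv).mul hinv).sub (hinv.mul hinv)
  have hg := (hcube.mul hρ0).sub (hinv.mul hρ1)
  have h := (neg_one_div_hasDerivAt hx).exp.mul hg
  refine h.congr_deriv ?_
  simp only [Pi.mul_apply, Pi.sub_apply]
  have h2 : ((x:ℝ) ^ 2)⁻¹ = x⁻¹ * x⁻¹ := by rw [pow_two, mul_inv]
  rw [h2]
  ring


theorem lemma3_second (ν : ℝ) :
    (∀ x : ℝ, 0 < x →
      DifferentiableAt ℝ (fun y => Real.exp (-1 / y) * y⁻¹ * rho ν y) x ∧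
      DifferentiableAt ℝ (deriv fun y => Real.exp (-1 / y) * y⁻¹ * rho ν y) x) ∧
    ∀ x : ℝ, 0 < x →
      x ^ 4 * deriv (deriv fun y => Real.exp (-1 / y) * y⁻¹ * rho ν y) x +
        x ^ 2 * ((3 - ν) * x - 2) * deriv (fun y => Real.exp (-1 / y) * y⁻¹ * rho ν y) x -
        (x - 1) * (x ^ 2 + ν * x + 1) * (Real.exp (-1 / x) * x⁻¹ * rho ν x) = 0 := by
  have hev : ∀ x : ℝ, 0 < x →
      (deriv fun y => Real.exp (-1 / y) * y⁻¹ * rho ν y) =ᶠ[𝓝 x]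
        (fun y => Real.exp (-1 / y) *
          ((y⁻¹ * y⁻¹ * y⁻¹ - y⁻¹ * y⁻¹) * rho ν y - y⁻¹ * rho (ν - 1) y)) := by
    intro x hx
    filter_upwards [Ioi_mem_nhds hx] with y hy
    exact (omega_deriv ν hy).deriv
  constructor
  · intro x hx
    refine ⟨(omega_deriv ν hx).differentiableAt, ?_⟩
    exact (Filter.EventuallyEq.differentiableAt_iff (hev x hx)).2
      (omega_deriv2 ν hx).differentiableAt
  · intro x hx
    have hd1 : deriv (fun y => Real.exp (-1 / y) * y⁻¹ * rho ν y) x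
        = Real.exp (-1 / x) * ((x⁻¹ * x⁻¹ * x⁻¹ - x⁻¹ * x⁻¹) * rho ν x - x⁻¹ * rho (ν - 1) x) :=
      (omega_deriv ν hx).deriv
    have hd2 : deriv (deriv fun y => Real.exp (-1 / y) * y⁻¹ * rho ν y) x
        = Real.exp (-1 / x) * ((x⁻¹^5 - 4*x⁻¹^4 + 2*x⁻¹^3) * rho ν x
          - (2*x⁻¹^3 - 2*x⁻¹^2) * rho (ν - 1) x + x⁻¹ * rho (ν - 2) x) := by
      rw [(hev x hx).deriv_eq]
      exact (omega_deriv2 ν hx).deriv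
    rw [hd1, hd2]
    have hrec := rho_rec ν hx
    have hρν : rho ν x = x * rho (ν - 2) x + (ν - 1) * rho (ν - 1) x := by linarith
    rw [hρν]
    have hx0 : x ≠ 0 := hx.ne'
    field_simp
    ring
end

section
/- Let ν > 0, let Q(x) = ∑_{k=0}^n a_k x^k be a real polynomial and let m ∈ ℕ. With the associated polynomial q(t) = ∑_{k=0}^n a_k (−1)^k k! t^k L_k^ν(t), one has ∫₀^∞ Q(x) e^(−1/x) ρ_ν(x) x^(m−1) dx = ∫₀^∞ t^(ν−1) e^(−t) q(t) ρ_(−m)(1/t) dt. In particular, Q is orthogonal to x^m with respect to the weight e^(−1/x) x^(−1) ρ_ν(x) if and only if the right-hand integral vanishes. -/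
open Real MeasureTheory

/-- The associated Laguerre polynomial
`L_n^ν(x) = ∑_{k=0}^n ((−1)^k/k!)·(Γ(n+ν+1)/(Γ(k+ν+1)·(n−k)!))·x^k`. -/
noncomputable def assocLaguerre (ν : ℝ) (n : ℕ) (x : ℝ) : ℝ :=
  ∑ k ∈ Finset.range (n + 1),
    ((-1 : ℝ) ^ k / k.factorial) *
      (Real.Gamma (n + ν + 1) / (Real.Gamma (k + ν + 1) * (n - k).factorial)) * x ^ k

open Set Filter Topology

lemma pow_le_fact_mul_exp {s : ℝ} (hs : 0 ≤ s) (N : ℕ) :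
    s ^ N ≤ N.factorial * Real.exp s := by
  have h := Real.sum_le_exp_of_nonneg hs (N + 1)
  have h2 : s ^ N / N.factorial ≤ ∑ i ∈ Finset.range (N + 1), s ^ i / i.factorial :=
    Finset.single_le_sum (f := fun i => s ^ i / i.factorial)
      (fun i _ => by positivity) (Finset.self_mem_range_succ N)
  have hN : (0 : ℝ) < N.factorial := by positivity
  calc s ^ N = s ^ N / N.factorial * N.factorial := by field_simp
    _ ≤ Real.exp s * N.factorial := by
        apply mul_le_mul_of_nonneg_right (h2.trans h) hN.le
    _ = N.factorial * Real.exp s := by ring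

lemma exp_neg_div_le {z t : ℝ} (hz : 0 < z) (ht : 0 < t) (N : ℕ) :
    Real.exp (-(z / t)) ≤ N.factorial * t ^ N / z ^ N := by
  have h := pow_le_fact_mul_exp (le_of_lt (div_pos hz ht)) N
  rw [div_pow] at h
  rw [Real.exp_neg]
  rw [inv_le_iff_one_le_mul₀ (Real.exp_pos _), div_mul_eq_mul_div, le_div_iff₀ (by positivity)]
  calc (1 : ℝ) * z ^ N = z ^ N := one_mul _
    _ ≤ N.factorial * t ^ N * Real.exp (z / t) := by
        rw [div_le_iff₀ (by positivity)] at h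
        linarith [h]

lemma measurable_rpow_const (q : ℝ) : Measurable fun x : ℝ => x ^ q := by
  have h : ∀ x : ℝ, x ^ q = if x = 0 then (if q = 0 then 1 else 0)
      else Real.exp (Real.log x * q) * (if x < 0 then Real.cos (q * π) else 1) := by
    intro x
    rcases lt_trichotomy x 0 with hx | hx | hx
    · rw [if_neg (ne_of_lt hx), if_pos hx, Real.rpow_def_of_neg hx]
    · subst hx
      rw [if_pos rfl]
      split_ifs with hq
      · simp [hq]
      · exact Real.zero_rpow hq
    · rw [if_neg (ne_of_gt hx), if_neg (not_lt.2 hx.le), Real.rpow_def_of_pos hx, mul_one]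
  have hmeas : Measurable fun x : ℝ => if x = 0 then (if q = 0 then (1:ℝ) else 0)
      else Real.exp (Real.log x * q) * (if x < 0 then Real.cos (q * π) else 1) := by
    refine Measurable.ite ?_ measurable_const ?_
    · exact MeasurableSet.singleton 0
    · refine ((Real.measurable_log.mul measurable_const).exp).mul ?_
      refine Measurable.ite measurableSet_Iio measurable_const measurable_const
  have heq : (fun x : ℝ => x ^ q) = fun x : ℝ => if x = 0 then (if q = 0 then (1:ℝ) else 0)
      else Real.exp (Real.log x * q) * (if x < 0 then Real.cos (q * π) else 1) := funext h
  rw [heq]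
  exact hmeas

lemma kernel_meas (μ : ℝ) (z : ℝ) :
    Measurable (fun t : ℝ => t ^ (μ - 1) * Real.exp (-t - z / t)) := by
  apply Measurable.mul
  · exact measurable_rpow_const _
  · exact (measurable_id.neg.sub ((measurable_const.div measurable_id))).exp

lemma kernel_nonneg (μ : ℝ) (z : ℝ) {t : ℝ} (ht : 0 < t) :
    0 ≤ t ^ (μ - 1) * Real.exp (-t - z / t) := by positivity

lemma kernel_le (μ : ℝ) {z : ℝ} (hz : 0 < z) (N : ℕ) {t : ℝ} (ht : 0 < t) :
    t ^ (μ - 1) * Real.exp (-t - z / t) ≤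
      (N.factorial / z ^ N) * (t ^ (μ + N - 1) * Real.exp (-t)) := by
  have hsplit : Real.exp (-t - z / t) = Real.exp (-t) * Real.exp (-(z / t)) := by
    rw [← Real.exp_add]; ring_nf
  have hb := exp_neg_div_le hz ht N
  have hrp : t ^ (μ - 1) * (t : ℝ) ^ N = t ^ (μ + N - 1) := by
    rw [← Real.rpow_natCast t N, ← Real.rpow_add ht]
    ring_nf
  calc t ^ (μ - 1) * Real.exp (-t - z / t)
      = (t ^ (μ - 1) * Real.exp (-t)) * Real.exp (-(z / t)) := by rw [hsplit]; ring
    _ ≤ (t ^ (μ - 1) * Real.exp (-t)) * (N.factorial * t ^ N / z ^ N) := by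
        apply mul_le_mul_of_nonneg_left hb (by positivity)
    _ = (N.factorial / z ^ N) * ((t ^ (μ - 1) * t ^ N) * Real.exp (-t)) := by ring
    _ = (N.factorial / z ^ N) * (t ^ (μ + N - 1) * Real.exp (-t)) := by rw [hrp]

lemma integrableOn_gamma_kernel {s : ℝ} (hs : 0 < s) :
    IntegrableOn (fun t : ℝ => t ^ (s - 1) * Real.exp (-t)) (Ioi 0) := by
  have := Real.GammaIntegral_convergent hs
  refine this.congr_fun (fun t _ => by ring) measurableSet_Ioi

lemma integrableOn_kernel (μ : ℝ) {z : ℝ} (hz : 0 < z) :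
    IntegrableOn (fun t => t ^ (μ - 1) * Real.exp (-t - z / t)) (Ioi 0) := by
  set N : ℕ := ⌈-μ⌉₊ + 1 with hN
  have hμN : 0 < μ + N := by
    have : (-μ : ℝ) ≤ ⌈-μ⌉₊ := Nat.le_ceil _
    have : ((N : ℝ)) = (⌈-μ⌉₊ : ℝ) + 1 := by push_cast [hN]; ring
    linarith
  refine Integrable.mono' (g := fun t => (N.factorial / z ^ N) * (t ^ (μ + N - 1) * Real.exp (-t)))
    ((integrableOn_gamma_kernel hμN).const_mul _) ((kernel_meas μ z).aestronglyMeasurable) ?_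
  filter_upwards [ae_restrict_mem measurableSet_Ioi] with t ht
  rw [Real.norm_eq_abs, abs_of_nonneg (kernel_nonneg μ z ht)]
  exact kernel_le μ hz N ht

lemma rho_nonneg (μ z : ℝ) : 0 ≤ rho μ z := by
  apply setIntegral_nonneg measurableSet_Ioi
  intro t ht
  exact kernel_nonneg μ z ht

lemma rho_le {μ z : ℝ} (hz : 0 < z) (N : ℕ) (h : 0 < μ + N) :
    rho μ z ≤ N.factorial * Real.Gamma (μ + N) / z ^ N := by
  have h1 : rho μ z ≤ ∫ t in Ioi (0:ℝ), (N.factorial / z ^ N) * (t ^ (μ + N - 1) * Real.exp (-t)) := by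
    apply setIntegral_mono_on (integrableOn_kernel μ hz)
      ((integrableOn_gamma_kernel h).const_mul _) measurableSet_Ioi
    intro t ht
    exact kernel_le μ hz N ht
  rw [integral_const_mul] at h1
  rw [Real.Gamma_eq_integral h]
  have h2 : ∫ t in Ioi (0:ℝ), t ^ (μ + N - 1) * Real.exp (-t)
      = ∫ t in Ioi (0:ℝ), Real.exp (-t) * t ^ (μ + N - 1) := by
    congr 1; ext t; ring
  rw [h2] at h1
  have h3 : (N.factorial : ℝ) / z ^ N * ∫ t in Ioi (0:ℝ), Real.exp (-t) * t ^ (μ + N - 1)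
      = N.factorial * (∫ t in Ioi (0:ℝ), Real.exp (-t) * t ^ (μ + N - 1)) / z ^ N := by ring
  linarith [h1, h3.symm.le]

lemma rho_meas (μ : ℝ) : Measurable (rho μ) := by
  have hm : StronglyMeasurable (fun p : ℝ × ℝ => p.2 ^ (μ - 1) * Real.exp (-p.2 - p.1 / p.2)) := by
    apply Measurable.stronglyMeasurable
    exact ((measurable_rpow_const (μ - 1)).comp measurable_snd).mul
      ((measurable_snd.neg.sub (measurable_fst.div measurable_snd)).exp)
  exact (hm.integral_prod_right').measurable

lemma rho_tendsto_top_aux (μ : ℝ) {z : ℝ} (hz : 0 < z) :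
    Tendsto (fun t : ℝ => if t ≤ 0 then 0 else t ^ μ * Real.exp (-t - z / t))
      atTop (𝓝 0) := by
  have h0 := tendsto_rpow_mul_exp_neg_mul_atTop_nhds_zero μ 1 one_pos
  refine squeeze_zero' ?_ ?_ h0
  · filter_upwards [eventually_gt_atTop (0:ℝ)] with t ht
    split_ifs with h
    · exact le_refl 0
    · positivity
  · filter_upwards [eventually_gt_atTop (0:ℝ)] with t ht
    rw [if_neg (not_le.2 ht)]
    have : Real.exp (-t - z / t) ≤ Real.exp (-1 * t) := by
      apply Real.exp_le_exp.2
      have : 0 ≤ z / t := le_of_lt (div_pos hz ht)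
      linarith
    exact mul_le_mul_of_nonneg_left this (Real.rpow_nonneg ht.le μ)

lemma rho_tendsto_zero_aux (μ : ℝ) {z : ℝ} (hz : 0 < z) :
    ContinuousWithinAt (fun t : ℝ => if t ≤ 0 then 0 else t ^ μ * Real.exp (-t - z / t))
      (Ici (0:ℝ)) 0 := by
  set N : ℕ := ⌈-μ⌉₊ + 1 with hN
  have hμN : 0 < μ + N := by
    have h1 : (-μ : ℝ) ≤ ⌈-μ⌉₊ := Nat.le_ceil _
    have h2 : ((N : ℝ)) = (⌈-μ⌉₊ : ℝ) + 1 := by push_cast [hN]; ring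
    linarith
  have hf0 : (if (0:ℝ) ≤ 0 then (0:ℝ) else (0:ℝ) ^ μ * Real.exp (-0 - z / 0)) = 0 := by simp
  unfold ContinuousWithinAt
  have hshow : (fun t : ℝ => if t ≤ 0 then (0:ℝ) else t ^ μ * Real.exp (-t - z / t)) 0 = 0 := by
    simp
  rw [hshow]
  have hg : Tendsto (fun t : ℝ => (N.factorial / z ^ N) * t ^ (μ + N)) (𝓝[Ici 0] 0) (𝓝 0) := by
    have hc : ContinuousAt (fun t : ℝ => t ^ (μ + N)) 0 :=
      Real.continuousAt_rpow_const 0 (μ + N) (Or.inr hμN.le)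
    have : Tendsto (fun t : ℝ => t ^ (μ + N)) (𝓝[Ici 0] 0) (𝓝 ((0:ℝ) ^ (μ + N))) :=
      (hc.continuousWithinAt)
    rw [Real.zero_rpow (ne_of_gt hμN)] at this
    simpa using this.const_mul (N.factorial / z ^ N : ℝ)
  refine squeeze_zero' ?_ ?_ hg
  · filter_upwards [self_mem_nhdsWithin] with t (ht : 0 ≤ t)
    split_ifs with h
    · exact le_refl 0
    · push_neg at h; positivity
  · filter_upwards [self_mem_nhdsWithin] with t (ht : 0 ≤ t)
    split_ifs with h
    · have ht0 : t = 0 := le_antisymm h ht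
      subst ht0
      rw [Real.zero_rpow (ne_of_gt hμN)]
      simp
    · push_neg at h
      have hb := exp_neg_div_le hz h N
      have hsplit : Real.exp (-t - z / t) = Real.exp (-t) * Real.exp (-(z / t)) := by
        rw [← Real.exp_add]; ring_nf
      have hexp1 : Real.exp (-t) ≤ 1 := Real.exp_le_one_iff.2 (by linarith)
      have hrp : t ^ μ * (t : ℝ) ^ N = t ^ (μ + N) := by
        rw [← Real.rpow_natCast t N, ← Real.rpow_add h]
      calc t ^ μ * Real.exp (-t - z / t)
          ≤ t ^ μ * Real.exp (-(z / t)) := by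
            rw [hsplit, ← mul_assoc]
            apply mul_le_mul_of_nonneg_right _ (Real.exp_pos _).le
            nlinarith [Real.rpow_nonneg h.le μ, Real.exp_pos (-t), (Real.exp_pos (-t)).le, hexp1,
              mul_le_of_le_one_right (Real.rpow_nonneg h.le μ) hexp1]
        _ ≤ t ^ μ * (N.factorial * t ^ N / z ^ N) := by
            apply mul_le_mul_of_nonneg_left hb (Real.rpow_nonneg h.le μ)
        _ = (N.factorial / z ^ N) * (t ^ μ * t ^ N) := by ring
        _ = (N.factorial / z ^ N) * t ^ (μ + N) := by rw [hrp]

lemma rho_hasDerivAt_s17 (μ : ℝ) (z : ℝ) {x : ℝ} (hx : 0 < x) :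
    HasDerivAt (fun t : ℝ => if t ≤ 0 then 0 else t ^ μ * Real.exp (-t - z / t))
      (μ * (x ^ (μ - 1) * Real.exp (-x - z / x)) - x ^ ((μ + 1) - 1) * Real.exp (-x - z / x)
        + z * (x ^ ((μ - 1) - 1) * Real.exp (-x - z / x))) x := by
  have h1 : HasDerivAt (fun t : ℝ => t ^ μ) (μ * x ^ (μ - 1)) x := by
    simpa [mul_comm] using Real.hasDerivAt_rpow_const (x := x) (p := μ) (Or.inl hx.ne')
  have h2 : HasDerivAt (fun t : ℝ => -t - z / t) (-1 + z / x ^ 2) x := by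
    have ha : HasDerivAt (fun t : ℝ => -t) (-1 : ℝ) x := (hasDerivAt_id x).neg
    have hb : HasDerivAt (fun t : ℝ => z / t) (z * (-(x ^ 2)⁻¹)) x := by
      simpa [div_eq_mul_inv] using (hasDerivAt_inv hx.ne').const_mul z
    have := ha.sub hb
    refine this.congr_deriv ?_
    ring
  have h3 : HasDerivAt (fun t : ℝ => Real.exp (-t - z / t))
      (Real.exp (-x - z / x) * (-1 + z / x ^ 2)) x := h2.exp
  have h4 := h1.mul h3
  have heq : (fun t : ℝ => if t ≤ 0 then (0:ℝ) else t ^ μ * Real.exp (-t - z / t))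
      =ᶠ[𝓝 x] fun t : ℝ => t ^ μ * Real.exp (-t - z / t) := by
    filter_upwards [Ioi_mem_nhds hx] with t (ht : 0 < t)
    rw [if_neg (not_le.2 ht)]
  refine HasDerivAt.congr_of_eventuallyEq ?_ heq
  refine h4.congr_deriv ?_
  have e1 : x ^ ((μ + 1) - 1) = x ^ μ := by norm_num
  have e2 : x ^ ((μ - 1) - 1) = x ^ μ / x ^ 2 := by
    rw [eq_div_iff (by positivity)]
    rw [show (x:ℝ) ^ 2 = x ^ ((2:ℕ):ℝ) by rw [Real.rpow_natCast], ← Real.rpow_add hx]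
    congr 1
    push_cast
    ring
  rw [e1, e2]
  field_simp
  ring

lemma rho_recurrence {z : ℝ} (hz : 0 < z) (μ : ℝ) :
    rho (μ + 1) z = μ * rho μ z + z * rho (μ - 1) z := by
  set f : ℝ → ℝ := fun t => if t ≤ 0 then 0 else t ^ μ * Real.exp (-t - z / t) with hf
  set f' : ℝ → ℝ := fun t =>
    μ * (t ^ (μ - 1) * Real.exp (-t - z / t)) - t ^ ((μ + 1) - 1) * Real.exp (-t - z / t)
      + z * (t ^ ((μ - 1) - 1) * Real.exp (-t - z / t)) with hf'
  have hint1 := integrableOn_kernel μ hz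
  have hint2 := integrableOn_kernel (μ + 1) hz
  have hint3 := integrableOn_kernel (μ - 1) hz
  have f'int : IntegrableOn f' (Ioi 0) :=
    ((hint1.const_mul μ).sub hint2).add (hint3.const_mul z)
  have key : ∫ t in Ioi (0:ℝ), f' t = 0 - f 0 :=
    integral_Ioi_of_hasDerivAt_of_tendsto (rho_tendsto_zero_aux μ hz)
      (fun t ht => rho_hasDerivAt_s17 μ z ht) f'int (rho_tendsto_top_aux μ hz)
  have hf0 : f 0 = 0 := by simp [hf]
  rw [hf0, sub_zero] at key
  have hsplit : ∫ t in Ioi (0:ℝ), f' t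
      = μ * rho μ z - rho (μ + 1) z + z * rho (μ - 1) z := by
    have e1 : ∫ t in Ioi (0:ℝ), f' t
        = (∫ t in Ioi (0:ℝ), (μ * (t ^ (μ - 1) * Real.exp (-t - z / t))
            - t ^ ((μ + 1) - 1) * Real.exp (-t - z / t)))
          + ∫ t in Ioi (0:ℝ), z * (t ^ ((μ - 1) - 1) * Real.exp (-t - z / t)) :=
      integral_add ((hint1.const_mul μ).sub hint2) (hint3.const_mul z)
    have e2 : ∫ t in Ioi (0:ℝ), (μ * (t ^ (μ - 1) * Real.exp (-t - z / t))
            - t ^ ((μ + 1) - 1) * Real.exp (-t - z / t))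
        = (∫ t in Ioi (0:ℝ), μ * (t ^ (μ - 1) * Real.exp (-t - z / t)))
          - ∫ t in Ioi (0:ℝ), t ^ ((μ + 1) - 1) * Real.exp (-t - z / t) :=
      integral_sub (hint1.const_mul μ) hint2
    rw [e1, e2, integral_const_mul, integral_const_mul]
    rfl
  rw [hsplit] at key
  linarith

noncomputable def D (ν : ℝ) : ℕ → ℕ → ℝ
  | 0, j => if j = 0 then 1 else 0
  | (k+1), j => (if j = 0 then 0 else D ν k (j-1)) - (ν + k + j + 1) * D ν k j

lemma D_eq_zero (ν : ℝ) : ∀ k j, k < j → D ν k j = 0 := by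
  intro k
  induction k with
  | zero => intro j hj; simp [D]; omega
  | succ k ih =>
    intro j hj
    rw [D]
    have h1 : j ≠ 0 := by omega
    rw [if_neg h1, ih j (by omega), ih (j-1) (by omega)]
    ring

lemma rho_poly {ν z : ℝ} (hz : 0 < z) (k : ℕ) :
    z ^ k * rho ν z = ∑ j ∈ Finset.range (k + 1), D ν k j * rho (ν + k + j) z := by
  induction k with
  | zero => simp [D]
  | succ k ih =>
    have hrec : ∀ j : ℕ, z * rho (ν + k + j) z
        = rho (ν + k + j + 2) z - (ν + k + j + 1) * rho (ν + k + j + 1) z := by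
      intro j
      have h := rho_recurrence hz (ν + k + j + 1)
      rw [show ν + (k:ℝ) + j + 1 - 1 = ν + k + j by ring,
          show ν + (k:ℝ) + j + 1 + 1 = ν + k + j + 2 by ring] at h
      linarith
    have step1 : z ^ (k+1) * rho ν z
        = ∑ j ∈ Finset.range (k + 1), D ν k j *
            (rho (ν + k + j + 2) z - (ν + k + j + 1) * rho (ν + k + j + 1) z) := by
      rw [pow_succ, show z ^ k * z * rho ν z = z * (z ^ k * rho ν z) by ring, ih,
          Finset.mul_sum]
      apply Finset.sum_congr rfl
      intro j _
      rw [← hrec j]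
      ring
    rw [step1]
    have expand : ∑ i ∈ Finset.range (k + 2), D ν (k+1) i * rho (ν + (k+1:ℕ) + i) z
        = (∑ i ∈ Finset.range (k + 2),
            (if i = 0 then (0:ℝ) else D ν k (i-1)) * rho (ν + (k+1:ℕ) + i) z)
          - ∑ i ∈ Finset.range (k + 2),
              (ν + k + i + 1) * D ν k i * rho (ν + (k+1:ℕ) + i) z := by
      rw [← Finset.sum_sub_distrib]
      apply Finset.sum_congr rfl
      intro i _
      rw [D]
      ring
    rw [expand]
    have sumA : ∑ i ∈ Finset.range (k + 2),
        (if i = 0 then (0:ℝ) else D ν k (i-1)) * rho (ν + (k+1:ℕ) + i) z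
        = ∑ j ∈ Finset.range (k + 1), D ν k j * rho (ν + k + j + 2) z := by
      rw [Finset.sum_range_succ']
      norm_num
      apply Finset.sum_congr rfl
      intro j _
      congr 2
      push_cast
      ring
    have sumB : ∑ i ∈ Finset.range (k + 2),
        (ν + k + i + 1) * D ν k i * rho (ν + (k+1:ℕ) + i) z
        = ∑ j ∈ Finset.range (k + 1), (ν + k + j + 1) * D ν k j * rho (ν + k + j + 1) z := by
      rw [Finset.sum_range_succ, D_eq_zero ν k (k+1) (by omega)]
      simp only [mul_zero, zero_mul, add_zero]
      apply Finset.sum_congr rfl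
      intro j _
      congr 2
      push_cast
      ring
    rw [sumA, sumB, ← Finset.sum_sub_distrib]
    apply Finset.sum_congr rfl
    intro j _
    ring

lemma D_closed {ν : ℝ} (hν : 0 < ν) : ∀ k j : ℕ, j ≤ k →
    D ν k j = (-1:ℝ)^(k+j) * k.factorial * Real.Gamma (k + ν + 1)
      / (j.factorial * Real.Gamma (j + ν + 1) * (k - j).factorial) := by
  intro k
  induction k with
  | zero =>
    intro j hj
    interval_cases j
    have hΓ : Real.Gamma ((0:ℝ) + ν + 1) ≠ 0 :=
      (Real.Gamma_pos_of_pos (by linarith)).ne'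
    simp only [D, if_pos rfl]
    push_cast
    field_simp
    simp
  | succ k ih =>
    intro j hj
    have hΓk : Real.Gamma ((k:ℝ) + ν + 1) ≠ 0 :=
      (Real.Gamma_pos_of_pos (by positivity)).ne'
    have hΓk1 : Real.Gamma (((k:ℕ)+1:ℕ) + ν + 1) = ((k:ℝ) + ν + 1) * Real.Gamma ((k:ℝ) + ν + 1) := by
      rw [show (((k:ℕ)+1:ℕ):ℝ) + ν + 1 = ((k:ℝ) + ν + 1) + 1 by push_cast; ring]
      rw [Real.Gamma_add_one (by positivity)]
    rcases Nat.eq_zero_or_pos j with hj0 | hjpos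
    · subst hj0
      rw [D, if_pos rfl, zero_sub, ih 0 (Nat.zero_le k)]
      have hΓν : Real.Gamma ((0:ℝ) + ν + 1) ≠ 0 :=
        (Real.Gamma_pos_of_pos (by linarith)).ne'
      rw [hΓk1]
      push_cast
      have hfk : ((k+1).factorial : ℝ) = (k+1) * k.factorial := by
        rw [Nat.factorial_succ]; push_cast; ring
      push_cast [Nat.factorial_succ, Nat.factorial_zero]
      have hfne : ((k.factorial : ℝ)) ≠ 0 := by positivity
      field_simp
      simp only [Nat.sub_zero]
      ring
    · obtain ⟨i, rfl⟩ : ∃ i, j = i + 1 := ⟨j - 1, by omega⟩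
      have hik : i ≤ k := by omega
      have hΓi : Real.Gamma ((i:ℝ) + ν + 1) ≠ 0 :=
        (Real.Gamma_pos_of_pos (by positivity)).ne'
      have hΓi1 : Real.Gamma (((i:ℕ)+1:ℕ) + ν + 1) = ((i:ℝ) + ν + 1) * Real.Gamma ((i:ℝ) + ν + 1) := by
        rw [show (((i:ℕ)+1:ℕ):ℝ) + ν + 1 = ((i:ℝ) + ν + 1) + 1 by push_cast; ring]
        rw [Real.Gamma_add_one (by positivity)]
      rw [D, if_neg (Nat.succ_ne_zero i), Nat.add_sub_cancel]
      rcases eq_or_lt_of_le hik with rfl | hlt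
      · -- j = i + 1 = k + 1 (here i = k)
        rw [D_eq_zero ν i (i+1) (by omega), mul_zero, sub_zero, ih i le_rfl]
        rw [hΓk1]
        simp only [Nat.sub_self]
        push_cast [Nat.factorial_succ, Nat.factorial_zero]
        have h1 : ((i.factorial : ℝ)) ≠ 0 := by positivity
        field_simp
        rw [show i+1+(i+1) = (i+i)+2 by omega, pow_add _ (i+i) 2]
        norm_num
      · -- i + 1 ≤ k
        have hik1 : i + 1 ≤ k := hlt
        rw [ih i hik, ih (i+1) hik1]
        rw [hΓk1, hΓi1]
        have hsub : ((k - i).factorial : ℝ) = ((k:ℝ) - i) * ((k - (i+1)).factorial : ℝ) := by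
          rw [show k - i = (k - (i+1)) + 1 by omega, Nat.factorial_succ]
          push_cast [Nat.cast_sub (show i+1 ≤ k by omega)]
          ring
        rw [Nat.succ_sub_succ, hsub]
        have hcast : ((k - (i+1)).factorial : ℝ) ≠ 0 := by positivity
        have h2 : ((i.factorial : ℝ)) ≠ 0 := by positivity
        have h3 : ((k.factorial : ℝ)) ≠ 0 := by positivity
        have h4 : ((k:ℝ) - i) ≠ 0 := by
          have : (i:ℝ) < k := by exact_mod_cast hlt
          linarith
        have hsign : ((-1:ℝ))^(k+1+(i+1)) = (-1:ℝ)^(k+i) := by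
          rw [show k+1+(i+1) = (k+i)+2 by omega, pow_add]
          norm_num
        push_cast [Nat.factorial_succ, hsign]
        field_simp
        ring

lemma meas_uform (α : ℝ) (c : ℝ) :
    Measurable (fun u : ℝ => u ^ c * (Real.exp (-u) * rho α (1 / u))) :=
  (measurable_rpow_const c).mul
    ((measurable_id.neg.exp).mul ((rho_meas α).comp (measurable_const.div measurable_id)))

lemma integrableOn_uform (α : ℝ) (hα : 0 < α) (K : ℕ) :
    IntegrableOn (fun u : ℝ => u ^ (-(K:ℝ) - 1) * (Real.exp (-u) * rho α (1 / u))) (Ioi 0) := by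
  set N : ℕ := K + 1 with hN
  have hbound : ∀ u : ℝ, 0 < u →
      u ^ (-(K:ℝ) - 1) * (Real.exp (-u) * rho α (1 / u))
        ≤ (N.factorial * Real.Gamma (α + N)) * Real.exp (-u) := by
    intro u hu
    have h1u : 0 < 1 / u := by positivity
    have hrle := rho_le (μ := α) h1u N (by positivity)
    have hzpow : ((1:ℝ) / u) ^ N = u ^ (-(N:ℝ)) := by
      rw [one_div, inv_pow, ← Real.rpow_natCast u N, ← Real.rpow_neg hu.le]
    have h2 : rho α (1 / u) ≤ N.factorial * Real.Gamma (α + N) * u ^ ((N:ℝ)) := by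
      rw [hzpow] at hrle
      rwa [Real.rpow_neg hu.le, div_inv_eq_mul] at hrle
    have hexp : (0:ℝ) < Real.exp (-u) := Real.exp_pos _
    have hup : (0:ℝ) ≤ u ^ (-(K:ℝ) - 1) := Real.rpow_nonneg hu.le _
    calc u ^ (-(K:ℝ) - 1) * (Real.exp (-u) * rho α (1 / u))
        ≤ u ^ (-(K:ℝ) - 1) * (Real.exp (-u) * (N.factorial * Real.Gamma (α + N) * u ^ ((N:ℝ)))) := by
          apply mul_le_mul_of_nonneg_left _ hup
          exact mul_le_mul_of_nonneg_left h2 hexp.le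
      _ = (N.factorial * Real.Gamma (α + N)) * Real.exp (-u)
            * (u ^ (-(K:ℝ) - 1) * u ^ ((N:ℝ))) := by ring
      _ = (N.factorial * Real.Gamma (α + N)) * Real.exp (-u) := by
          rw [← Real.rpow_add hu, hN]
          push_cast
          rw [show -(K:ℝ) - 1 + ((K:ℝ) + 1) = 0 by ring, Real.rpow_zero, mul_one]
  have hexpint : IntegrableOn (fun u : ℝ => (N.factorial * Real.Gamma (α + N)) * Real.exp (-u))
      (Ioi 0) := by
    have := exp_neg_integrableOn_Ioi (0:ℝ) (one_pos)
    refine (this.congr_fun (fun u _ => by norm_num) measurableSet_Ioi).const_mul _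
  refine Integrable.mono' hexpint ((meas_uform α _).aestronglyMeasurable) ?_
  filter_upwards [ae_restrict_mem measurableSet_Ioi] with u (hu : 0 < u)
  have hnn : 0 ≤ u ^ (-(K:ℝ) - 1) * (Real.exp (-u) * rho α (1 / u)) := by
    have := rho_nonneg α (1/u)
    positivity
  rw [Real.norm_eq_abs, abs_of_nonneg hnn]
  exact hbound u hu

lemma integrableOn_tform (μ : ℝ) (hμ : 0 < μ) (m : ℕ) :
    IntegrableOn (fun t : ℝ => t ^ (μ - 1) * (Real.exp (-t) * rho (-(m:ℝ)) (1 / t))) (Ioi 0) := by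
  have hbound : ∀ t : ℝ, 0 < t →
      t ^ (μ - 1) * (Real.exp (-t) * rho (-(m:ℝ)) (1 / t))
        ≤ ((m+1).factorial : ℝ) * (t ^ ((μ + (m+1):ℝ) - 1) * Real.exp (-t)) := by
    intro t ht
    have h1t : 0 < 1 / t := by positivity
    have hrle := rho_le (μ := -(m:ℝ)) h1t (m+1) (by push_cast; linarith)
    have hΓ1 : Real.Gamma (-(m:ℝ) + (m+1:ℕ)) = 1 := by
      rw [show (-(m:ℝ) + ((m+1:ℕ):ℝ)) = 1 by push_cast; ring]
      exact Real.Gamma_one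
    rw [hΓ1, mul_one] at hrle
    have hzpow : ((1:ℝ) / t) ^ (m+1) = t ^ (-((m:ℝ)+1)) := by
      rw [one_div, inv_pow, ← Real.rpow_natCast t (m+1), ← Real.rpow_neg ht.le]
      push_cast; ring_nf
    have h2 : rho (-(m:ℝ)) (1 / t) ≤ ((m+1).factorial : ℝ) * t ^ (((m:ℝ)+1)) := by
      rw [hzpow] at hrle
      rwa [show (-((m:ℝ)+1)) = -(((m:ℝ)+1)) by ring, Real.rpow_neg ht.le, div_inv_eq_mul] at hrle
    have hup : (0:ℝ) ≤ t ^ (μ - 1) := Real.rpow_nonneg ht.le _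
    calc t ^ (μ - 1) * (Real.exp (-t) * rho (-(m:ℝ)) (1 / t))
        ≤ t ^ (μ - 1) * (Real.exp (-t) * (((m+1).factorial : ℝ) * t ^ (((m:ℝ)+1)))) := by
          apply mul_le_mul_of_nonneg_left _ hup
          exact mul_le_mul_of_nonneg_left h2 (Real.exp_pos _).le
      _ = ((m+1).factorial : ℝ) * ((t ^ (μ - 1) * t ^ (((m:ℝ)+1))) * Real.exp (-t)) := by ring
      _ = ((m+1).factorial : ℝ) * (t ^ ((μ + (m+1):ℝ) - 1) * Real.exp (-t)) := by
          rw [← Real.rpow_add ht]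
          ring_nf
  have hgint : IntegrableOn
      (fun t : ℝ => ((m+1).factorial : ℝ) * (t ^ ((μ + (m+1):ℝ) - 1) * Real.exp (-t))) (Ioi 0) :=
    (integrableOn_gamma_kernel (by push_cast; linarith)).const_mul _
  refine Integrable.mono' hgint
    (((measurable_rpow_const (μ-1)).mul
      ((measurable_id.neg.exp).mul
        ((rho_meas (-(m:ℝ))).comp (measurable_const.div measurable_id)))).aestronglyMeasurable) ?_
  filter_upwards [ae_restrict_mem measurableSet_Ioi] with t (ht : 0 < t)
  have hnn : 0 ≤ t ^ (μ - 1) * (Real.exp (-t) * rho (-(m:ℝ)) (1 / t)) := by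
    have := rho_nonneg (-(m:ℝ)) (1/t)
    positivity
  rw [Real.norm_eq_abs, abs_of_nonneg hnn]
  exact hbound t ht

lemma rho_swap_integral (α : ℝ) (hα : 0 < α) (m : ℕ) :
    ∫ u in Ioi (0:ℝ), u ^ (-(m:ℝ) - 1) * (Real.exp (-u) * rho α (1 / u))
      = ∫ t in Ioi (0:ℝ), t ^ (α - 1) * (Real.exp (-t) * rho (-(m:ℝ)) (1 / t)) := by
  set F : ℝ → ℝ → ℝ := fun t u =>
    (t ^ (α - 1) * Real.exp (-t)) * (u ^ (-(m:ℝ) - 1) * Real.exp (-u - (1 / t) / u)) with hF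
  have hmeas : Measurable (Function.uncurry F) := by
    apply Measurable.mul
    · exact ((measurable_rpow_const (α - 1)).comp measurable_fst).mul
        (measurable_fst.neg.exp)
    · exact ((measurable_rpow_const (-(m:ℝ) - 1)).comp measurable_snd).mul
        ((measurable_snd.neg.sub ((measurable_const.div measurable_fst).div measurable_snd)).exp)
  have hFnn : ∀ t u : ℝ, 0 < t → 0 < u → 0 ≤ F t u := by
    intro t u ht hu
    have h1 : (0:ℝ) ≤ t ^ (α - 1) := Real.rpow_nonneg ht.le _
    have h2 : (0:ℝ) ≤ u ^ (-(m:ℝ) - 1) := Real.rpow_nonneg hu.le _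
    positivity
  have hinner : ∀ t : ℝ, 0 < t →
      ∫ u in Ioi (0:ℝ), F t u = t ^ (α - 1) * (Real.exp (-t) * rho (-(m:ℝ)) (1 / t)) := by
    intro t ht
    rw [hF]
    simp only []
    rw [MeasureTheory.integral_const_mul]
    have : rho (-(m:ℝ)) (1 / t) = ∫ u in Ioi (0:ℝ), u ^ (-(m:ℝ) - 1) * Real.exp (-u - (1/t) / u) :=
      rfl
    rw [← this]
    ring
  have hinner2 : ∀ u : ℝ, 0 < u →
      ∫ t in Ioi (0:ℝ), F t u = u ^ (-(m:ℝ) - 1) * (Real.exp (-u) * rho α (1 / u)) := by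
    intro u hu
    have hpt : ∀ t : ℝ, F t u
        = (u ^ (-(m:ℝ) - 1) * Real.exp (-u)) * (t ^ (α - 1) * Real.exp (-t - (1 / u) / t)) := by
      intro t
      rw [hF]
      simp only []
      have hexp : Real.exp (-t) * Real.exp (-u - (1/t) / u)
          = Real.exp (-u) * Real.exp (-t - (1/u) / t) := by
        rw [← Real.exp_add, ← Real.exp_add]
        congr 1
        rw [div_div, div_div, mul_comm u t]
        ring
      calc t ^ (α - 1) * Real.exp (-t) * (u ^ (-(m:ℝ) - 1) * Real.exp (-u - (1/t)/u))
          = (u ^ (-(m:ℝ) - 1) * t ^ (α - 1)) * (Real.exp (-t) * Real.exp (-u - (1/t)/u)) := by ring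
        _ = (u ^ (-(m:ℝ) - 1) * t ^ (α - 1)) * (Real.exp (-u) * Real.exp (-t - (1/u)/t)) := by
            rw [hexp]
        _ = (u ^ (-(m:ℝ) - 1) * Real.exp (-u)) * (t ^ (α - 1) * Real.exp (-t - (1/u)/t)) := by ring
    rw [show (fun t => F t u) = fun t => (u ^ (-(m:ℝ) - 1) * Real.exp (-u))
        * (t ^ (α - 1) * Real.exp (-t - (1 / u) / t)) from funext hpt]
    rw [MeasureTheory.integral_const_mul]
    have : rho α (1 / u) = ∫ t in Ioi (0:ℝ), t ^ (α - 1) * Real.exp (-t - (1/u) / t) := rfl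
    rw [← this]
    ring
  have hInt : Integrable (Function.uncurry F)
      ((volume.restrict (Ioi 0)).prod (volume.restrict (Ioi 0))) := by
    rw [MeasureTheory.integrable_prod_iff hmeas.aestronglyMeasurable]
    constructor
    · filter_upwards [ae_restrict_mem measurableSet_Ioi] with t (ht : 0 < t)
      have h1t : 0 < 1 / t := by positivity
      have := (integrableOn_kernel (-(m:ℝ)) h1t).const_mul (t ^ (α - 1) * Real.exp (-t))
      exact this
    · have heq : ∀ᵐ t ∂(volume.restrict (Ioi (0:ℝ))),
          (∫ u in Ioi (0:ℝ), ‖F t u‖) = t ^ (α - 1) * (Real.exp (-t) * rho (-(m:ℝ)) (1 / t)) := by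
        filter_upwards [ae_restrict_mem measurableSet_Ioi] with t (ht : 0 < t)
        have : ∫ u in Ioi (0:ℝ), ‖F t u‖ = ∫ u in Ioi (0:ℝ), F t u := by
          apply setIntegral_congr_fun measurableSet_Ioi
          intro u hu
          exact Real.norm_of_nonneg (hFnn t u ht hu)
        rw [this, hinner t ht]
      exact (integrableOn_tform α hα m).congr (heq.mono fun t ht => ht.symm)
  calc ∫ u in Ioi (0:ℝ), u ^ (-(m:ℝ) - 1) * (Real.exp (-u) * rho α (1 / u))
      = ∫ u in Ioi (0:ℝ), ∫ t in Ioi (0:ℝ), F t u := by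
        refine (setIntegral_congr_fun measurableSet_Ioi fun u hu => ?_).symm
        exact hinner2 u hu
    _ = ∫ t in Ioi (0:ℝ), ∫ u in Ioi (0:ℝ), F t u := (integral_integral_swap hInt).symm
    _ = ∫ t in Ioi (0:ℝ), t ^ (α - 1) * (Real.exp (-t) * rho (-(m:ℝ)) (1 / t)) :=
        setIntegral_congr_fun measurableSet_Ioi (fun t ht => hinner t ht)

lemma lhs_pointwise (ν : ℝ) (n : ℕ) (a : ℕ → ℝ) (m : ℕ) {u : ℝ} (hu : 0 < u) :
    (|(-1 : ℝ)| * u ^ ((-1 : ℝ) - 1)) •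
        ((∑ k ∈ Finset.range (n + 1), a k * (u ^ (-1 : ℝ)) ^ k) * Real.exp (-1 / u ^ (-1 : ℝ)) *
          rho ν (u ^ (-1 : ℝ)) * (u ^ (-1 : ℝ)) ^ ((m : ℝ) - 1))
      = ∑ k ∈ Finset.range (n + 1),
          a k * (u ^ (-((k : ℝ) + (m : ℝ)) - 1) * (Real.exp (-u) * rho ν (1 / u))) := by
  have habs : |(-1 : ℝ)| = 1 := by norm_num
  rw [Real.rpow_neg_one, smul_eq_mul, habs, one_mul]
  rw [show (-1 : ℝ) / u⁻¹ = -u by rw [div_inv_eq_mul]; ring]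
  rw [show u⁻¹ = 1 / u from (one_div u).symm]
  have hP : ((1:ℝ) / u) ^ ((m : ℝ) - 1) = u ^ (1 - (m : ℝ)) := by
    rw [one_div, Real.inv_rpow hu.le, ← Real.rpow_neg hu.le]
    congr 1; ring
  rw [hP]
  rw [Finset.sum_mul, Finset.sum_mul, Finset.sum_mul, Finset.mul_sum]
  apply Finset.sum_congr rfl
  intro k _
  have hk : ((1:ℝ) / u) ^ k = u ^ (-(k : ℝ)) := by
    rw [one_div, inv_pow, ← Real.rpow_natCast u k, ← Real.rpow_neg hu.le]
  rw [hk]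
  have hcollect : u ^ ((-1 : ℝ) - 1) * (u ^ (-(k : ℝ)) * u ^ (1 - (m : ℝ)))
      = u ^ (-((k : ℝ) + (m : ℝ)) - 1) := by
    rw [← Real.rpow_add hu, ← Real.rpow_add hu]
    congr 1; ring
  calc u ^ ((-1 : ℝ) - 1) * (a k * u ^ (-(k : ℝ)) * Real.exp (-u) * rho ν (1 / u) * u ^ (1 - (m : ℝ)))
      = (u ^ ((-1 : ℝ) - 1) * (u ^ (-(k : ℝ)) * u ^ (1 - (m : ℝ)))) *
          (a k * (Real.exp (-u) * rho ν (1 / u))) := by ring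
    _ = a k * (u ^ (-((k : ℝ) + (m : ℝ)) - 1) * (Real.exp (-u) * rho ν (1 / u))) := by
        rw [hcollect]; ring

theorem main_eq (ν : ℝ) (hν : 0 < ν) (n : ℕ) (a : ℕ → ℝ) (m : ℕ) :
    (∫ x in Set.Ioi (0 : ℝ),
        (∑ k ∈ Finset.range (n + 1), a k * x ^ k) * Real.exp (-1 / x) * rho ν x *
          x ^ ((m : ℝ) - 1)) =
      (∫ t in Set.Ioi (0 : ℝ),
        t ^ (ν - 1) * Real.exp (-t) *
          (∑ k ∈ Finset.range (n + 1),
            a k * (-1 : ℝ) ^ k * k.factorial * t ^ k * assocLaguerre ν k t) *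
          rho (-(m : ℝ)) (1 / t)) := by
  -- Step 1: change of variables x = 1/u on the LHS
  have hcv := MeasureTheory.integral_comp_rpow_Ioi
      (g := fun x : ℝ => (∑ k ∈ Finset.range (n + 1), a k * x ^ k) * Real.exp (-1 / x) *
        rho ν x * x ^ ((m : ℝ) - 1)) (p := (-1 : ℝ)) (by norm_num)
  rw [← hcv]
  have h1 : (∫ u in Ioi (0:ℝ),
      (|(-1 : ℝ)| * u ^ ((-1 : ℝ) - 1)) •
        ((∑ k ∈ Finset.range (n + 1), a k * (u ^ (-1 : ℝ)) ^ k) * Real.exp (-1 / u ^ (-1 : ℝ)) *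
          rho ν (u ^ (-1 : ℝ)) * (u ^ (-1 : ℝ)) ^ ((m : ℝ) - 1)))
      = ∫ u in Ioi (0:ℝ), ∑ k ∈ Finset.range (n + 1),
          a k * (u ^ (-((k : ℝ) + (m : ℝ)) - 1) * (Real.exp (-u) * rho ν (1 / u))) :=
    setIntegral_congr_fun measurableSet_Ioi (fun u hu => lhs_pointwise ν n a m hu)
  rw [h1]
  -- integrability of each u-term
  have hUint : ∀ k : ℕ, IntegrableOn
      (fun u : ℝ => a k * (u ^ (-((k : ℝ) + (m : ℝ)) - 1) * (Real.exp (-u) * rho ν (1 / u))))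
      (Ioi 0) := by
    intro k
    have := (integrableOn_uform ν hν (k + m)).const_mul (a k)
    have hexp : (-(((k + m : ℕ) : ℝ)) - 1) = (-((k : ℝ) + (m : ℝ)) - 1) := by push_cast; ring
    rwa [hexp] at this
  rw [MeasureTheory.integral_finset_sum _ (fun k _ => hUint k)]
  -- Step 2: per k, expand with rho_poly and swap
  have hstep2 : ∀ k : ℕ,
      (∫ u in Ioi (0:ℝ), a k * (u ^ (-((k : ℝ) + (m : ℝ)) - 1) * (Real.exp (-u) * rho ν (1 / u))))
      = ∑ j ∈ Finset.range (k + 1), (a k * D ν k j) *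
          ∫ t in Ioi (0:ℝ), t ^ (ν + (k:ℝ) + (j:ℝ) - 1) * (Real.exp (-t) * rho (-(m : ℝ)) (1 / t)) := by
    intro k
    have hupoly : ∀ u : ℝ, u ∈ Ioi (0:ℝ) →
        a k * (u ^ (-((k : ℝ) + (m : ℝ)) - 1) * (Real.exp (-u) * rho ν (1 / u)))
          = ∑ j ∈ Finset.range (k + 1), (a k * D ν k j) *
              (u ^ (-(m : ℝ) - 1) * (Real.exp (-u) * rho (ν + (k:ℝ) + (j:ℝ)) (1 / u))) := by
      intro u hu
      have hu' : (0:ℝ) < u := hu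
      have hp := rho_poly (ν := ν) (show (0:ℝ) < 1 / u by positivity) k
      have huk : u ^ (-((k : ℝ) + (m : ℝ)) - 1) = u ^ (-(m : ℝ) - 1) * ((1:ℝ)/u) ^ k := by
        rw [one_div, inv_pow, ← Real.rpow_natCast u k, ← Real.rpow_neg hu'.le,
            ← Real.rpow_add hu']
        congr 1; ring
      rw [huk]
      calc a k * (u ^ (-(m : ℝ) - 1) * ((1:ℝ)/u) ^ k * (Real.exp (-u) * rho ν (1 / u)))
          = (a k * (u ^ (-(m : ℝ) - 1) * Real.exp (-u))) * (((1:ℝ)/u) ^ k * rho ν (1 / u)) := by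
            ring
        _ = (a k * (u ^ (-(m : ℝ) - 1) * Real.exp (-u))) *
              ∑ j ∈ Finset.range (k + 1), D ν k j * rho (ν + (k:ℝ) + (j:ℝ)) (1 / u) := by
            rw [hp]
        _ = ∑ j ∈ Finset.range (k + 1), (a k * D ν k j) *
              (u ^ (-(m : ℝ) - 1) * (Real.exp (-u) * rho (ν + (k:ℝ) + (j:ℝ)) (1 / u))) := by
            rw [Finset.mul_sum]
            apply Finset.sum_congr rfl
            intro j _
            ring
    rw [setIntegral_congr_fun measurableSet_Ioi hupoly]
    rw [MeasureTheory.integral_finset_sum _ (fun j _ => by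
      exact ((integrableOn_uform (ν + (k:ℝ) + (j:ℝ)) (by positivity) m).const_mul
        (a k * D ν k j)))]
    apply Finset.sum_congr rfl
    intro j _
    rw [MeasureTheory.integral_const_mul]
    rw [rho_swap_integral (ν + (k:ℝ) + (j:ℝ)) (by positivity) m]
  -- Step 3: RHS expansion
  have hLag : ∀ (k : ℕ) (t : ℝ),
      a k * (-1 : ℝ) ^ k * k.factorial * t ^ k * assocLaguerre ν k t
        = ∑ j ∈ Finset.range (k + 1), (a k * D ν k j) * t ^ (k + j) := by
    intro k t
    rw [assocLaguerre, Finset.mul_sum]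
    apply Finset.sum_congr rfl
    intro j hj
    have hjk : j ≤ k := Nat.lt_succ_iff.mp (Finset.mem_range.mp hj)
    rw [D_closed hν k j hjk, pow_add, pow_add]
    have h1 : ((j.factorial : ℝ)) ≠ 0 := by positivity
    have h2 : Real.Gamma ((j:ℝ) + ν + 1) ≠ 0 := (Real.Gamma_pos_of_pos (by positivity)).ne'
    have h3 : (((k - j).factorial : ℝ)) ≠ 0 := by positivity
    field_simp
  have hrhs_pt : ∀ t : ℝ, t ∈ Ioi (0:ℝ) →
      t ^ (ν - 1) * Real.exp (-t) *
          (∑ k ∈ Finset.range (n + 1),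
            a k * (-1 : ℝ) ^ k * k.factorial * t ^ k * assocLaguerre ν k t) *
          rho (-(m : ℝ)) (1 / t)
        = ∑ k ∈ Finset.range (n + 1), ∑ j ∈ Finset.range (k + 1), (a k * D ν k j) *
            (t ^ (ν + (k:ℝ) + (j:ℝ) - 1) * (Real.exp (-t) * rho (-(m : ℝ)) (1 / t))) := by
    intro t ht
    have ht' : (0:ℝ) < t := ht
    rw [show (∑ k ∈ Finset.range (n + 1),
        a k * (-1 : ℝ) ^ k * k.factorial * t ^ k * assocLaguerre ν k t)
      = ∑ k ∈ Finset.range (n + 1), ∑ j ∈ Finset.range (k + 1), (a k * D ν k j) * t ^ (k + j)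
      from Finset.sum_congr rfl (fun k _ => hLag k t)]
    rw [Finset.mul_sum, Finset.sum_mul]
    apply Finset.sum_congr rfl
    intro k _
    rw [Finset.mul_sum, Finset.sum_mul]
    apply Finset.sum_congr rfl
    intro j _
    have hpow : t ^ (ν - 1) * t ^ (k + j : ℕ) = t ^ (ν + (k:ℝ) + (j:ℝ) - 1) := by
      rw [← Real.rpow_natCast t (k + j), ← Real.rpow_add ht']
      congr 1; push_cast; ring
    calc t ^ (ν - 1) * Real.exp (-t) * ((a k * D ν k j) * t ^ (k + j)) * rho (-(m : ℝ)) (1 / t)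
        = (t ^ (ν - 1) * t ^ (k + j : ℕ)) * ((a k * D ν k j) *
            (Real.exp (-t) * rho (-(m : ℝ)) (1 / t))) := by ring
      _ = (a k * D ν k j) *
            (t ^ (ν + (k:ℝ) + (j:ℝ) - 1) * (Real.exp (-t) * rho (-(m : ℝ)) (1 / t))) := by
          rw [hpow]; ring
  rw [setIntegral_congr_fun measurableSet_Ioi hrhs_pt]
  rw [MeasureTheory.integral_finset_sum _ (fun k _ => by
    apply MeasureTheory.integrable_finset_sum
    intro j _
    exact ((integrableOn_tform (ν + (k:ℝ) + (j:ℝ)) (by positivity) m).const_mul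
      (a k * D ν k j)))]
  apply Finset.sum_congr rfl
  intro k _
  rw [hstep2 k]
  rw [MeasureTheory.integral_finset_sum _ (fun j _ => by
    exact ((integrableOn_tform (ν + (k:ℝ) + (j:ℝ)) (by positivity) m).const_mul
      (a k * D ν k j)))]
  apply Finset.sum_congr rfl
  intro j _
  rw [MeasureTheory.integral_const_mul]

theorem composition_orthogonality_minus (ν : ℝ) (hν : 0 < ν) (n : ℕ) (a : ℕ → ℝ) (m : ℕ) :
    (∫ x in Set.Ioi (0 : ℝ),
        (∑ k ∈ Finset.range (n + 1), a k * x ^ k) * Real.exp (-1 / x) * rho ν x *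
          x ^ ((m : ℝ) - 1)) =
      (∫ t in Set.Ioi (0 : ℝ),
        t ^ (ν - 1) * Real.exp (-t) *
          (∑ k ∈ Finset.range (n + 1),
            a k * (-1 : ℝ) ^ k * k.factorial * t ^ k * assocLaguerre ν k t) *
          rho (-(m : ℝ)) (1 / t)) ∧
    ((∫ x in Set.Ioi (0 : ℝ),
        (∑ k ∈ Finset.range (n + 1), a k * x ^ k) * Real.exp (-1 / x) * rho ν x *
          x ^ ((m : ℝ) - 1)) = 0 ↔
      (∫ t in Set.Ioi (0 : ℝ),
        t ^ (ν - 1) * Real.exp (-t) *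
          (∑ k ∈ Finset.range (n + 1),
            a k * (-1 : ℝ) ^ k * k.factorial * t ^ k * assocLaguerre ν k t) *
          rho (-(m : ℝ)) (1 / t)) = 0) := by
  have h := main_eq ν hν n a m
  exact ⟨h, by rw [h]⟩
end
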